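/- Let n ≥ 3 be a natural number. Then ∫_{ℝⁿ} (n−2)² |x|² (1+|x|²)^{−n} dx = n(n−2) π^{n/2} Γ(n/2) / Γ(n). -/

import Mathlib

open MeasureTheory Real

lemma real_beta_Ioo {a b : ℝ} (ha : 0 < a) (hb : 0 < b) :
    ∫ x in Set.Ioo (0:ℝ) 1, x ^ (a - 1) * (1 - x) ^ (b - 1)
      = Real.Gamma a * Real.Gamma b / Real.Gamma (a + b) := by
  have key := Complex.Gamma_mul_Gamma_eq_betaIntegral (s := (a : ℂ)) (t := (b : ℂ))
    (by simpa using ha) (by simpa using hb)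
  have hbeta : Complex.betaIntegral (a : ℂ) (b : ℂ)
      = ((∫ x in Set.Ioo (0:ℝ) 1, x ^ (a - 1) * (1 - x) ^ (b - 1) : ℝ) : ℂ) := by
    rw [Complex.betaIntegral, intervalIntegral.integral_of_le zero_le_one,
      MeasureTheory.integral_Ioc_eq_integral_Ioo]
    rw [show ((∫ x in Set.Ioo (0:ℝ) 1, x ^ (a - 1) * (1 - x) ^ (b - 1) : ℝ) : ℂ)
        = ∫ x in Set.Ioo (0:ℝ) 1, ((x ^ (a - 1) * (1 - x) ^ (b - 1) : ℝ) : ℂ) from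
      (integral_ofReal).symm]
    refine setIntegral_congr_fun measurableSet_Ioo fun x hx => ?_
    have h1 : (0:ℝ) ≤ x := hx.1.le
    have h2 : (0:ℝ) ≤ 1 - x := by linarith [hx.2]
    rw [Complex.ofReal_mul, Complex.ofReal_cpow h1, Complex.ofReal_cpow h2]
    push_cast
    ring
  rw [hbeta, ← Complex.ofReal_add, Complex.Gamma_ofReal, Complex.Gamma_ofReal,
    Complex.Gamma_ofReal, ← Complex.ofReal_mul, ← Complex.ofReal_mul] at key
  have hkey : Real.Gamma a * Real.Gamma b
      = Real.Gamma (a + b) * ∫ x in Set.Ioo (0:ℝ) 1, x ^ (a - 1) * (1 - x) ^ (b - 1) :=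
    mod_cast key
  have hG : Real.Gamma (a + b) ≠ 0 := (Real.Gamma_pos_of_pos (by linarith)).ne'
  field_simp [hkey]
  rw [hkey]; ring

lemma real_beta_Ioi {a b : ℝ} (ha : 0 < a) (hb : 0 < b) :
    ∫ t in Set.Ioi (0:ℝ), t ^ (a - 1) * (1 + t) ^ (-(a + b))
      = Real.Gamma a * Real.Gamma b / Real.Gamma (a + b) := by
  set f : ℝ → ℝ := fun x => x / (1 - x) with hf
  set f' : ℝ → ℝ := fun x => ((1 - x) ^ 2)⁻¹ with hf'
  have himg : f '' Set.Ioo (0:ℝ) 1 = Set.Ioi (0:ℝ) := by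
    ext t
    constructor
    · rintro ⟨x, hx, rfl⟩
      exact div_pos hx.1 (by linarith [hx.2])
    · intro ht
      have ht' : (0:ℝ) < t := ht
      refine ⟨t / (1 + t), ⟨div_pos ht' (by linarith), ?_⟩, ?_⟩
      · rw [div_lt_one (by linarith)]; linarith
      · simp only [hf]
        have h1t : (1:ℝ) + t ≠ 0 := by positivity
        rw [show 1 - t / (1 + t) = 1 / (1 + t) by field_simp; ring]
        field_simp
  have hderiv : ∀ x ∈ Set.Ioo (0:ℝ) 1, HasDerivWithinAt f (f' x) (Set.Ioo (0:ℝ) 1) x := by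
    intro x hx
    have hne : (1:ℝ) - x ≠ 0 := by intro h; linarith [hx.2]
    have : HasDerivAt f ((1 * (1 - x) - x * (-1)) / (1 - x) ^ 2) x := by
      exact (hasDerivAt_id x).div ((hasDerivAt_id x).const_sub 1) hne
    have e : f' x = (1 * (1 - x) - x * (-1)) / (1 - x) ^ 2 := by
      show ((1 - x) ^ 2)⁻¹ = (1 * (1 - x) - x * (-1)) / (1 - x) ^ 2
      rw [inv_eq_one_div]; congr 1; ring
    rw [e]; exact this.hasDerivWithinAt
  have hinj : Set.InjOn f (Set.Ioo (0:ℝ) 1) := by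
    intro x hx y hy hxy
    have hx' : (1:ℝ) - x ≠ 0 := by intro h; linarith [hx.2]
    have hy' : (1:ℝ) - y ≠ 0 := by intro h; linarith [hy.2]
    simp only [hf] at hxy
    rw [div_eq_div_iff hx' hy'] at hxy
    nlinarith [hxy]
  rw [← himg, MeasureTheory.integral_image_eq_integral_abs_deriv_smul measurableSet_Ioo
    hderiv hinj, ← real_beta_Ioo ha hb]
  refine setIntegral_congr_fun measurableSet_Ioo fun x hx => ?_
  have hx0 : (0:ℝ) < x := hx.1
  have hx1 : (0:ℝ) < 1 - x := by linarith [hx.2]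
  have hfx : f x = x / (1 - x) := rfl
  have h1f : 1 + f x = (1 - x)⁻¹ := by rw [hfx]; field_simp; ring
  rw [smul_eq_mul, hfx, h1f, abs_of_pos (by positivity : (0:ℝ) < f' x)]
  have e1 : ((1-x:ℝ)⁻¹) ^ (-(a+b)) = (1-x) ^ (a+b) := by
    rw [← Real.rpow_neg_one (1-x), ← Real.rpow_mul hx1.le]; norm_num
  have e2 : f' x = (1-x) ^ (-2:ℝ) := by
    show ((1-x:ℝ)^2)⁻¹ = _
    rw [← Real.rpow_natCast (1-x) 2, ← Real.rpow_neg hx1.le]; norm_num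
  have e3 : (x / (1-x)) ^ (a-1) = x ^ (a-1) * (1-x) ^ (-(a-1)) := by
    rw [div_rpow hx0.le hx1.le, Real.rpow_neg hx1.le, div_eq_mul_inv]
  rw [e1, e2, e3, show ((1-x:ℝ))^(-2:ℝ) * (x ^ (a-1) * (1-x) ^ (-(a-1)) * (1-x)^(a+b))
      = x ^ (a-1) * ((1-x)^(-2:ℝ) * ((1-x) ^ (-(a-1)) * (1-x)^(a+b))) from by ring,
    ← Real.rpow_add hx1, ← Real.rpow_add hx1]
  ring_nf

theorem stmt_10 (n : ℕ) (hn : 3 ≤ n) :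
    (∫ x : EuclideanSpace ℝ (Fin n),
        ((n : ℝ) - 2) ^ 2 * ‖x‖ ^ 2 * (1 + ‖x‖ ^ 2) ^ (-(n : ℝ)))
      = (n : ℝ) * ((n : ℝ) - 2) * π ^ ((n : ℝ) / 2) * Real.Gamma ((n : ℝ) / 2)
          / Real.Gamma (n : ℝ) := by
  haveI : NeZero n := ⟨by omega⟩
  have hn2 : (2:ℝ) < n := by exact_mod_cast (by omega : (2:ℕ) < n)
  have hn0 : (0:ℝ) < n := by linarith
  -- Step 1: reduce to a radial integral
  have hrad := MeasureTheory.integral_fun_norm_addHaar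
    (volume : Measure (EuclideanSpace ℝ (Fin n)))
    (fun r : ℝ => ((n : ℝ) - 2) ^ 2 * r ^ 2 * (1 + r ^ 2) ^ (-(n : ℝ)))
  rw [finrank_euclideanSpace_fin] at hrad
  rw [hrad]
  -- Step 2: value of the volume of the unit ball
  have hball : ((volume (Metric.ball (0 : EuclideanSpace ℝ (Fin n)) 1)).toReal)
      = π ^ ((n:ℝ)/2) / Real.Gamma ((n:ℝ)/2 + 1) := by
    rw [EuclideanSpace.volume_ball]
    rw [Fintype.card_fin]
    simp only [ENNReal.ofReal_one, one_pow, one_mul]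
    rw [ENNReal.toReal_ofReal (by positivity)]
    congr 1
    rw [Real.sqrt_eq_rpow, ← Real.rpow_natCast (π ^ (1/(2:ℝ))) n,
      ← Real.rpow_mul pi_pos.le]
    rw [show (1/(2:ℝ)) * n = (n:ℝ)/2 from by ring]
  rw [measureReal_def, hball]
  -- Step 3: the radial integral via the Beta function
  have hsub := MeasureTheory.integral_comp_rpow_Ioi
    (fun t : ℝ => (((n:ℝ) - 2) ^ 2 / 2) • (t ^ ((n:ℝ)/2) * (1 + t) ^ (-(n:ℝ))))
    (p := 2) two_ne_zero
  have hIoi : (∫ y in Set.Ioi (0:ℝ),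
        y ^ (n - 1) • (((n : ℝ) - 2) ^ 2 * y ^ 2 * (1 + y ^ 2) ^ (-(n : ℝ))))
      = ∫ t in Set.Ioi (0:ℝ),
        (((n:ℝ) - 2) ^ 2 / 2) • (t ^ ((n:ℝ)/2) * (1 + t) ^ (-(n:ℝ))) := by
    rw [← hsub]
    refine setIntegral_congr_fun measurableSet_Ioi fun y hy => ?_
    have hy0 : (0:ℝ) < y := hy
    simp only [smul_eq_mul]
    have h2 : (y:ℝ) ^ (2:ℝ) = y ^ (2:ℕ) := by
      rw [← Real.rpow_natCast y 2]; norm_num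
    rw [h2]
    have h3 : ((y:ℝ) ^ (2:ℕ)) ^ ((n:ℝ)/2) = y ^ (n:ℕ) := by
      rw [← Real.rpow_natCast y 2, ← Real.rpow_mul hy0.le, ← Real.rpow_natCast y n]
      congr 1
      push_cast; ring
    rw [h3, abs_of_pos (two_pos : (0:ℝ) < 2)]
    have h4 : y ^ ((2:ℝ)-1) = y := by norm_num
    rw [h4]
    have h5 : y ^ (n - 1) * y ^ (2:ℕ) = y * y ^ (n:ℕ) := by
      rw [← pow_add, ← pow_succ']
      congr 1; omega
    linear_combination (((n:ℝ)-2)^2 * (1 + y ^ (2:ℕ)) ^ (-(n:ℝ))) * h5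
  rw [hIoi, integral_smul]
  have hB := real_beta_Ioi (a := (n:ℝ)/2 + 1) (b := (n:ℝ)/2 - 1)
    (by linarith) (by linarith)
  rw [show (n:ℝ)/2 + 1 - 1 = (n:ℝ)/2 from by ring,
    show ((n:ℝ)/2 + 1) + ((n:ℝ)/2 - 1) = (n:ℝ) from by ring] at hB
  rw [hB]
  have hG : Real.Gamma ((n:ℝ)/2) = ((n:ℝ)/2 - 1) * Real.Gamma ((n:ℝ)/2 - 1) := by
    rw [show (n:ℝ)/2 = ((n:ℝ)/2 - 1) + 1 from by ring,
      Real.Gamma_add_one (ne_of_gt (by linarith : (0:ℝ) < (n:ℝ)/2 - 1))]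
    ring_nf
  have h1 : Real.Gamma ((n:ℝ)/2 + 1) ≠ 0 := (Real.Gamma_pos_of_pos (by linarith)).ne'
  have h2 : Real.Gamma ((n:ℝ)) ≠ 0 := (Real.Gamma_pos_of_pos hn0).ne'
  simp only [nsmul_eq_mul, smul_eq_mul]
  rw [hG]
  field_simp
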